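/- (Zariski's elimination technique for short parameterizations.) Let n < m be positive integers and let S = {an + bm : a, b ∈ ℕ, (a,b) ≠ (0,0)} be the numerical semigroup generated by n and m. Let ν > m be an integer with ν ∉ S but ν + n ∈ S. Then: (i) ν + n = (j+1)m for some integer j ≥ 1; and (ii) for every b ∈ ℝ and every real-analytic function h defined near 0 in ℝ with h identically zero or ord(h) > ν, there exists a real-analytic function h' near 0 with h' identically zero or ord(h') > ν such that the planar curve germ t ↦ (tⁿ, t^m + b t^ν + h(t)) in ℝ² is RL-equivalent to the curve germ τ ↦ (τⁿ, τ^m + h'(τ)). -/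

import Mathlib

open Filter

/-- RL-equivalence of analytic curve germs `(ℝ,0) → (ℝⁿ,0)`:
there are an analytic germ `Φ : (ℝⁿ,0) → (ℝⁿ,0)` with invertible differential at `0`
and an analytic reparametrization `τ : (ℝ,0) → (ℝ,0)` with `τ'(0) ≠ 0`
such that `σ = Φ ∘ γ ∘ τ` near `0`. -/
def RLEquiv {n : ℕ} (γ σ : ℝ → (Fin n → ℝ)) : Prop :=
  ∃ (Φ : (Fin n → ℝ) → (Fin n → ℝ)) (τ : ℝ → ℝ),
    AnalyticAt ℝ Φ 0 ∧ Φ 0 = 0 ∧ Function.Bijective (fderiv ℝ Φ 0) ∧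
    AnalyticAt ℝ τ 0 ∧ τ 0 = 0 ∧ deriv τ 0 ≠ 0 ∧
    ∀ᶠ t in nhds (0 : ℝ), σ t = Φ (γ (τ t))

/-- The order of a function germ at `0`: the smallest `i` such that the `i`-th
Taylor coefficient (equivalently, the `i`-th derivative) at `0` is nonzero. -/
noncomputable def ord (f : ℝ → ℝ) : ℕ := sInf {i : ℕ | iteratedDeriv i f 0 ≠ 0}

/-- The semigroup of a curve germ: all orders `ord (P ∘ γ)` where `P` ranges over
analytic germs `(ℝⁿ,0) → (ℝ,0)` with `P ∘ γ` not identically zero near `0`. -/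
def curveSemigroup {n : ℕ} (γ : ℝ → (Fin n → ℝ)) : Set ℕ :=
  {k | ∃ P : (Fin n → ℝ) → ℝ, AnalyticAt ℝ P 0 ∧ P 0 = 0 ∧
      (¬ ∀ᶠ t in nhds (0 : ℝ), P (γ t) = 0) ∧ ord (fun t => P (γ t)) = k}

/-- The multiplicity of a curve germ: the minimum of the orders of its
not-identically-zero coordinate functions. -/
noncomputable def multC {n : ℕ} (γ : ℝ → (Fin n → ℝ)) : ℕ :=
  sInf {k | ∃ i : Fin n, (¬ ∀ᶠ t in nhds (0 : ℝ), γ t i = 0) ∧ ord (fun t => γ t i) = k}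

/-- The numerical semigroup generated by `n` and `m`. -/
def numSemigroup2 (n m : ℕ) : Set ℕ :=
  {k | ∃ a b : ℕ, (a ≠ 0 ∨ b ≠ 0) ∧ k = a * n + b * m}

/-!
(i) If `ν + n = a n + b m` with `a ≥ 1`, then `ν = (a - 1) n + b m` would lie in the semigroup;
so `a = 0`, and `ν + n > m` forces `b ≥ 2`.

(ii) Put `e = ν - m`, so that `e + n = j m`, and `c = n b / m`. Write the second coordinate
`q = s^m + b s^ν + h` as `s^m Q` with `Q = 1 + b s^e + O(s^(e+1))`. The shear
`(x, y) ↦ (x + c y^j, y)` sends `(s^n, q)` to `(s^n (1 + W), q)` with `W = c s^e Q^j`, that is,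
to `(ρ^n, q)` for the analytic reparametrization `ρ = s (1 + W)^(1/n)`. In the parameter
`t = ρ(s)` the curve reads `(t^n, t^m + (q - ρ^m)(s))`. Finally
`ρ^m = s^m (1 + W)^(m/n) = s^m (1 + (m/n) W + O(W²))` with `(m/n) W = b s^e Q^j`: the choice
of `c` makes the term `b s^ν` cancel, and `q - ρ^m = O(s^(ν+1))`.
-/

open Topology

section AnalyticOrder

variable {𝕜 : Type*} [NontriviallyNormedField 𝕜] {f g : 𝕜 → 𝕜} {z₀ : 𝕜} {k : ℕ∞}

lemma analyticOrderAt_pow_id (n : ℕ) : analyticOrderAt (fun z : 𝕜 => z ^ n) 0 = n := by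
  simpa [Pi.pow_def] using analyticOrderAt_centeredMonomial (z₀ := (0 : 𝕜)) (n := n)

lemma add_le_analyticOrderAt_mul {a b : ℕ∞} (hf : AnalyticAt 𝕜 f z₀) (hg : AnalyticAt 𝕜 g z₀)
    (ha : a ≤ analyticOrderAt f z₀) (hb : b ≤ analyticOrderAt g z₀) :
    a + b ≤ analyticOrderAt (fun z => f z * g z) z₀ := by
  rw [← Pi.mul_def, analyticOrderAt_mul hf hg]
  exact add_le_add ha hb

lemma le_analyticOrderAt_fun_add (hf : k ≤ analyticOrderAt f z₀) (hg : k ≤ analyticOrderAt g z₀) :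
    k ≤ analyticOrderAt (fun z => f z + g z) z₀ :=
  (le_min hf hg).trans le_analyticOrderAt_add

lemma le_analyticOrderAt_fun_sub (hf : k ≤ analyticOrderAt f z₀) (hg : k ≤ analyticOrderAt g z₀) :
    k ≤ analyticOrderAt (fun z => f z - g z) z₀ :=
  (le_min hf hg).trans le_analyticOrderAt_sub

variable [CompleteSpace 𝕜] [CharZero 𝕜]

lemma AnalyticAt.exists_localInverse (hf : AnalyticAt 𝕜 f z₀) (hf' : deriv f z₀ ≠ 0) :
    ∃ g : 𝕜 → 𝕜, AnalyticAt 𝕜 g (f z₀) ∧ g (f z₀) = z₀ ∧ deriv g (f z₀) ≠ 0 ∧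
      ∀ᶠ y in 𝓝 (f z₀), f (g y) = y :=
  ⟨_, hf.analyticAt_localInverse hf', HasStrictFDerivAt.localInverse_apply_image _,
    by rw [(HasStrictDerivAt.to_localInverse _ hf').hasDerivAt.deriv]; exact inv_ne_zero hf',
    HasStrictDerivAt.eventually_right_inverse _ hf'⟩

end AnalyticOrder

lemma bijective_fderiv_of_leftInverse_of_rightInverse {𝕜 E F : Type*} [NontriviallyNormedField 𝕜]
    [NormedAddCommGroup E] [NormedSpace 𝕜 E] [NormedAddCommGroup F] [NormedSpace 𝕜 F]
    {f : E → F} {g : F → E} {x : E} (hf : DifferentiableAt 𝕜 f x)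
    (hg : DifferentiableAt 𝕜 g (f x)) (hgf : Function.LeftInverse g f)
    (hfg : Function.RightInverse g f) : Function.Bijective (fderiv 𝕜 f x) := by
  have hleft : (fderiv 𝕜 g (f x)).comp (fderiv 𝕜 f x) = ContinuousLinearMap.id 𝕜 E := by
    rw [← fderiv_comp x hg hf, hgf.comp_eq_id, fderiv_id]
  have hright : (fderiv 𝕜 f x).comp (fderiv 𝕜 g (f x)) = ContinuousLinearMap.id 𝕜 F := by
    have hf' : DifferentiableAt 𝕜 f (g (f x)) := by rwa [hgf x]
    have hcomp := fderiv_comp (f x) hf' hg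
    rwa [hfg.comp_eq_id, fderiv_id, hgf x, eq_comm] at hcomp
  refine Function.bijective_iff_has_inverse.mpr ⟨fderiv 𝕜 g (f x), fun v => ?_, fun w => ?_⟩
  · simpa using congrArg (· v) hleft
  · simpa [hgf x] using congrArg (· w) hright

lemma eventually_eq_zero_or_lt_ord_iff {f : ℝ → ℝ} (hf : AnalyticAt ℝ f 0) {k : ℕ} :
    ((∀ᶠ t in 𝓝 0, f t = 0) ∨ k < ord f) ↔ ((k + 1 : ℕ) : ℕ∞) ≤ analyticOrderAt f 0 := by
  constructor
  · rintro (hzero | hlt)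
    · simp [analyticOrderAt_eq_top.mpr hzero]
    · rw [natCast_le_analyticOrderAt_iff_iteratedDeriv_eq_zero hf]
      intro i hi
      by_contra hne
      have := Nat.sInf_le (s := {i | iteratedDeriv i f 0 ≠ 0}) hne
      unfold ord at hlt
      omega
  · rw [natCast_le_analyticOrderAt_iff_iteratedDeriv_eq_zero hf]
    intro hvan
    by_cases hzero : ∀ᶠ t in 𝓝 0, f t = 0
    · exact Or.inl hzero
    have hne : {i | iteratedDeriv i f 0 ≠ 0}.Nonempty := by
      by_contra hempty
      refine hzero (analyticOrderAt_eq_top.mp (ENat.eq_top_iff_forall_ge.mpr fun i => ?_))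
      rw [natCast_le_analyticOrderAt_iff_iteratedDeriv_eq_zero hf]
      exact fun l _ => by_contra fun hl => hempty ⟨l, hl⟩
    exact Or.inr (lt_of_not_ge fun hle => Nat.sInf_mem hne (hvan _ (Nat.lt_succ_of_le hle)))

lemma two_le_analyticOrderAt_one_add_rpow_sub (a : ℝ) :
    2 ≤ analyticOrderAt (fun w : ℝ => (1 + w) ^ a - 1 - a * w) 0 := by
  have hpow : HasDerivAt (fun w : ℝ => (1 + w) ^ a) a 0 := by
    simpa using ((hasDerivAt_id (0 : ℝ)).const_add 1).rpow_const (p := a) (by simp)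
  have hderiv : HasDerivAt (fun w : ℝ => (1 + w) ^ a - 1 - a * w) 0 0 := by
    simpa using (hpow.sub_const 1).fun_sub ((hasDerivAt_id' 0).const_mul a)
  have han : AnalyticAt ℝ (fun w : ℝ => (1 + w) ^ a - 1 - a * w) 0 :=
    (Real.one_add_rpow_hasFPowerSeriesAt_zero.analyticAt.sub analyticAt_const).sub
      (analyticAt_const.mul analyticAt_id)
  rw [show (2 : ℕ∞) = (2 : ℕ) by rfl, natCast_le_analyticOrderAt_iff_iteratedDeriv_eq_zero han]
  intro i hi
  interval_cases i
  · simp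
  · rw [iteratedDeriv_one, hderiv.deriv]

lemma two_mul_le_analyticOrderAt_one_add_rpow_comp_sub (a : ℝ) {W : ℝ → ℝ} {k : ℕ∞}
    (hW : AnalyticAt ℝ W 0) (hW0 : W 0 = 0) (hWk : k ≤ analyticOrderAt W 0) :
    2 * k ≤ analyticOrderAt (fun s => (1 + W s) ^ a - 1 - a * W s) 0 := by
  have hψ : AnalyticAt ℝ (fun w : ℝ => (1 + w) ^ a - 1 - a * w) (W 0) := by
    rw [hW0]
    exact (Real.one_add_rpow_hasFPowerSeriesAt_zero.analyticAt.sub analyticAt_const).sub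
      (analyticAt_const.mul analyticAt_id)
  have hcomp := hψ.analyticOrderAt_comp hW
  simp only [hW0, sub_zero] at hcomp
  exact (mul_le_mul' (two_le_analyticOrderAt_one_add_rpow_sub a) hWk).trans_eq hcomp.symm

def shear (f : ℝ → ℝ) (v : Fin 2 → ℝ) : Fin 2 → ℝ := ![v 0 + f (v 1), v 1]

lemma shear_neg_shear (f : ℝ → ℝ) : Function.LeftInverse (shear (-f)) (shear f) := by
  intro v
  ext i
  fin_cases i <;> simp [shear]

lemma analyticAt_shear {f : ℝ → ℝ} {v : Fin 2 → ℝ} (hf : AnalyticAt ℝ f (v 1)) :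
    AnalyticAt ℝ (shear f) v := by
  have hproj (i : Fin 2) : AnalyticAt ℝ (fun w : Fin 2 → ℝ => w i) v :=
    (ContinuousLinearMap.proj (R := ℝ) (φ := fun _ : Fin 2 => ℝ) i).analyticAt v
  refine AnalyticAt.pi fun i => ?_
  fin_cases i
  · exact (hproj 0).add (hf.comp (f := fun w : Fin 2 → ℝ => w 1) (hproj 1))
  · exact hproj 1

lemma bijective_fderiv_shear {f : ℝ → ℝ} {v : Fin 2 → ℝ} (hf : AnalyticAt ℝ f (v 1)) :
    Function.Bijective (fderiv ℝ (shear f) v) := by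
  refine bijective_fderiv_of_leftInverse_of_rightInverse (analyticAt_shear hf).differentiableAt
    (analyticAt_shear ?_).differentiableAt (shear_neg_shear f) ?_
  · simpa [shear] using hf.neg
  · simpa only [Function.RightInverse, neg_neg] using shear_neg_shear (-f)

noncomputable def rootReparam (n : ℕ) (W : ℝ → ℝ) (s : ℝ) : ℝ := s * (1 + W s) ^ ((n : ℝ)⁻¹)

section RootReparam

variable {n : ℕ} {W : ℝ → ℝ}

lemma analyticAt_rootReparam (hW : AnalyticAt ℝ W 0) (hW0 : W 0 = 0) :
    AnalyticAt ℝ (rootReparam n W) 0 := by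
  have hroot : AnalyticAt ℝ (fun w : ℝ => (1 + w) ^ ((n : ℝ)⁻¹)) (W 0) := by
    rw [hW0]; exact Real.one_add_rpow_hasFPowerSeriesAt_zero.analyticAt
  exact analyticAt_id.mul (hroot.comp hW)

lemma hasDerivAt_rootReparam (hW : DifferentiableAt ℝ W 0) (hW0 : W 0 = 0) :
    HasDerivAt (rootReparam n W) 1 0 := by
  have hroot : DifferentiableAt ℝ (fun s => (1 + W s) ^ ((n : ℝ)⁻¹)) 0 :=
    (differentiableAt_const _ |>.add hW).rpow_const (Or.inl (by simp [hW0]))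
  show HasDerivAt (fun s => s * (1 + W s) ^ ((n : ℝ)⁻¹)) 1 0
  simpa [hW0] using (hasDerivAt_id' 0).fun_mul hroot.hasDerivAt

lemma eventually_rootReparam_pow (hW : ContinuousAt W 0) (hW0 : W 0 = 0) (k : ℕ) :
    ∀ᶠ s in 𝓝 0, rootReparam n W s ^ k = s ^ k * (1 + W s) ^ ((k : ℝ) / n) := by
  have hpos : ∀ᶠ s in 𝓝 0, 0 ≤ 1 + W s := by
    have hlim : Tendsto (fun s => 1 + W s) (𝓝 0) (𝓝 1) := by
      simpa [hW0] using tendsto_const_nhds.add hW.tendsto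
    filter_upwards [hlim.eventually (lt_mem_nhds one_pos)] with s hs using hs.le
  filter_upwards [hpos] with s hs
  rw [rootReparam, mul_pow, ← Real.rpow_mul_natCast hs, inv_mul_eq_div]

end RootReparam

lemma le_analyticOrderAt_sub_rootReparam_pow {n m e j : ℕ} {b c : ℝ} {Q : ℝ → ℝ}
    (hQ : AnalyticAt ℝ Q 0) (hQ0 : Q 0 = 1) (he : 0 < e)
    (hQe : ((e + 1 : ℕ) : ℕ∞) ≤ analyticOrderAt (fun s => Q s - (1 + b * s ^ e)) 0)
    (hbc : (m : ℝ) / n * c = b) :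
    ((m + e + 1 : ℕ) : ℕ∞) ≤ analyticOrderAt
      (fun s => s ^ m * Q s - rootReparam n (fun s => c * s ^ e * Q s ^ j) s ^ m) 0 := by
  set W : ℝ → ℝ := fun s => c * s ^ e * Q s ^ j
  set a : ℝ := (m : ℝ) / n
  have hW : AnalyticAt ℝ W 0 := by fun_prop
  have hW0 : W 0 = 0 := by simp [W, zero_pow he.ne']
  have hroot : AnalyticAt ℝ (fun s => (1 + W s) ^ a) 0 := by
    have hbinom : AnalyticAt ℝ (fun w : ℝ => (1 + w) ^ a) (W 0) := by
      rw [hW0]; exact Real.one_add_rpow_hasFPowerSeriesAt_zero.analyticAt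
    exact hbinom.comp hW
  set D : ℝ → ℝ := fun s =>
    (Q s - (1 + b * s ^ e)) + b * s ^ e * (1 - Q s ^ j) - ((1 + W s) ^ a - 1 - a * W s)
  have hD : AnalyticAt ℝ D 0 := by fun_prop
  have hfactor : (fun s => s ^ m * Q s - rootReparam n W s ^ m) =ᶠ[𝓝 0] fun s => s ^ m * D s := by
    filter_upwards [eventually_rootReparam_pow hW.continuousAt hW0 m] with s hs
    rw [hs]
    simp only [D, W, ← hbc]
    ring
  have hmonomial (d : ℝ) : (e : ℕ∞) ≤ analyticOrderAt (fun s => d * s ^ e) 0 := by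
    simpa using add_le_analyticOrderAt_mul (f := fun _ => d) (g := fun s => s ^ e)
      analyticAt_const (by fun_prop) zero_le (analyticOrderAt_pow_id e).ge
  have hterm1 : ((e + 1 : ℕ) : ℕ∞) ≤ analyticOrderAt (fun s => b * s ^ e * (1 - Q s ^ j)) 0 := by
    have hvanish : 1 ≤ analyticOrderAt (fun s => 1 - Q s ^ j) 0 :=
      Order.one_le_iff_ne_zero.mpr
        (analyticOrderAt_ne_zero.mpr ⟨by fun_prop, by simp [hQ0]⟩)
    simpa using add_le_analyticOrderAt_mul (by fun_prop) (by fun_prop) (hmonomial b) hvanish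
  have hterm2 : ((e + 1 : ℕ) : ℕ∞) ≤
      analyticOrderAt (fun s => (1 + W s) ^ a - 1 - a * W s) 0 := by
    have hWe : (e : ℕ∞) ≤ analyticOrderAt W 0 := by
      simpa using add_le_analyticOrderAt_mul (by fun_prop) (hQ.pow j) (hmonomial c) zero_le
    calc ((e + 1 : ℕ) : ℕ∞) ≤ 2 * e := by norm_cast; omega
      _ ≤ _ := two_mul_le_analyticOrderAt_one_add_rpow_comp_sub a hW hW0 hWe
  rw [analyticOrderAt_congr hfactor]
  simpa [add_assoc] using add_le_analyticOrderAt_mul (analyticAt_id.pow m) hD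
    (analyticOrderAt_pow_id m).ge
    (le_analyticOrderAt_fun_sub (le_analyticOrderAt_fun_add hQe hterm1) hterm2)

lemma exists_eventuallyEq_pow_mul_of_le_analyticOrderAt {m e : ℕ} (he : 0 < e) (b : ℝ)
    {h : ℝ → ℝ} (hh : AnalyticAt ℝ h 0) (hord : ((m + e + 1 : ℕ) : ℕ∞) ≤ analyticOrderAt h 0) :
    ∃ Q : ℝ → ℝ, AnalyticAt ℝ Q 0 ∧ Q 0 = 1 ∧
      ((e + 1 : ℕ) : ℕ∞) ≤ analyticOrderAt (fun s => Q s - (1 + b * s ^ e)) 0 ∧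
      (fun s => s ^ m + b * s ^ (m + e) + h s) =ᶠ[𝓝 0] fun s => s ^ m * Q s := by
  obtain ⟨g, hg, hhg⟩ := (natCast_le_analyticOrderAt hh).mp hord
  refine ⟨fun s => 1 + b * s ^ e + s ^ (e + 1) * g s, by fun_prop, by simp [he.ne'],
    (natCast_le_analyticOrderAt (by fun_prop)).mpr ⟨g, hg, .of_forall fun s => by simp⟩, ?_⟩
  filter_upwards [hhg] with s hs
  simp only [hs, sub_zero, smul_eq_mul]
  ring

lemma exists_rlEquiv_of_le_analyticOrderAt {n m e j : ℕ} (hn : n ≠ 0) (hm : m ≠ 0) (he : 0 < e)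
    (hejm : e + n = j * m) (b : ℝ) {h : ℝ → ℝ} (hh : AnalyticAt ℝ h 0)
    (hord : ((m + e + 1 : ℕ) : ℕ∞) ≤ analyticOrderAt h 0) :
    ∃ h' : ℝ → ℝ, AnalyticAt ℝ h' 0 ∧ ((m + e + 1 : ℕ) : ℕ∞) ≤ analyticOrderAt h' 0 ∧
      RLEquiv (fun t : ℝ => ![t ^ n, t ^ m + b * t ^ (m + e) + h t])
        (fun t : ℝ => ![t ^ n, t ^ m + h' t]) := by
  obtain ⟨Q, hQ, hQ0, hQe, hqQ⟩ := exists_eventuallyEq_pow_mul_of_le_analyticOrderAt he b hh hord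
  set c : ℝ := n * b / m
  set q : ℝ → ℝ := fun s => s ^ m + b * s ^ (m + e) + h s
  set W : ℝ → ℝ := fun s => c * s ^ e * Q s ^ j
  have hq : AnalyticAt ℝ q 0 := by fun_prop
  have hW : AnalyticAt ℝ W 0 := by fun_prop
  have hW0 : W 0 = 0 := by simp [W, zero_pow he.ne']
  have hρn : ∀ᶠ s in 𝓝 0, rootReparam n W s ^ n = s ^ n + c * q s ^ j := by
    filter_upwards [eventually_rootReparam_pow hW.continuousAt hW0 n, hqQ] with s hρs hqs
    rw [hρs, hqs, div_self (Nat.cast_ne_zero.mpr hn), Real.rpow_one, mul_pow, ← pow_mul,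
      mul_comm m j, ← hejm, pow_add]
    ring
  have horder := le_analyticOrderAt_sub_rootReparam_pow (j := j) hQ hQ0 he hQe
    (by simp only [c]; field_simp : (m : ℝ) / n * c = b)
  have hρ0 : rootReparam n W 0 = 0 := by simp [rootReparam]
  obtain ⟨τ, hτ, hτ0, hτ', hρτ⟩ := (analyticAt_rootReparam (n := n) hW hW0).exists_localInverse
    (by rw [(hasDerivAt_rootReparam hW.differentiableAt hW0).deriv]; exact one_ne_zero)
  rw [hρ0] at hτ hτ0 hτ' hρτ
  have hτlim : Tendsto τ (𝓝 0) (𝓝 0) := by simpa [hτ0] using hτ.continuousAt.tendsto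
  have hj : j ≠ 0 := by rintro rfl; omega
  refine ⟨fun t => q (τ t) - t ^ m, ?_, ?_, shear (fun y => c * y ^ j), τ,
    analyticAt_shear (by fun_prop), ?_, bijective_fderiv_shear (by fun_prop), hτ, hτ0, hτ', ?_⟩
  · exact ((by rwa [hτ0] : AnalyticAt ℝ q (τ 0)).comp hτ).sub (by fun_prop)
  · have hcomp : (fun t => q (τ t) - t ^ m) =ᶠ[𝓝 0]
        (fun s => s ^ m * Q s - rootReparam n W s ^ m) ∘ τ := by
      filter_upwards [hρτ, hτlim.eventually hqQ] with t hρt hqt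
      simp only [Function.comp_apply, hρt, hqt]
    rwa [analyticOrderAt_congr hcomp, analyticOrderAt_comp_of_deriv_ne_zero hτ hτ', hτ0]
  · ext i
    fin_cases i <;> simp [shear, zero_pow hj]
  · filter_upwards [hρτ, hτlim.eventually hρn] with t hρt hρnt
    rw [hρt] at hρnt
    ext i
    fin_cases i
    · simp [shear, hρnt, q]
    · simp [shear, q]

lemma exists_add_eq_succ_mul_of_mem_numSemigroup2 {n m ν : ℕ} (hν : m < ν)
    (hν1 : ν ∉ numSemigroup2 n m) (hν2 : ν + n ∈ numSemigroup2 n m) :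
    ∃ j : ℕ, 1 ≤ j ∧ ν + n = (j + 1) * m := by
  obtain ⟨a, b, -, hab⟩ := hν2
  rcases a with _ | a
  · have hb : 2 ≤ b := by
      by_contra! hb
      interval_cases b <;> simp at hab <;> omega
    exact ⟨b - 1, by omega, by rw [hab, zero_mul, zero_add, Nat.sub_add_cancel (by omega)]⟩
  · refine absurd ⟨a, b, ?_, by rw [add_one_mul] at hab; omega⟩ hν1
    by_contra! hzero
    obtain ⟨rfl, rfl⟩ := hzero
    simp at hab
    omega

/-- Zariski's elimination technique for short parameterizations of planar curve germs. -/
theorem zariski_elimination (n m : ℕ) (hn : 0 < n) (hnm : n < m)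
    (ν : ℕ) (hν : m < ν) (hν1 : ν ∉ numSemigroup2 n m) (hν2 : ν + n ∈ numSemigroup2 n m) :
    (∃ j : ℕ, 1 ≤ j ∧ ν + n = (j + 1) * m) ∧
    (∀ (b : ℝ) (h : ℝ → ℝ), AnalyticAt ℝ h 0 →
      ((∀ᶠ t in nhds (0 : ℝ), h t = 0) ∨ ν < ord h) →
      ∃ h' : ℝ → ℝ, AnalyticAt ℝ h' 0 ∧
        ((∀ᶠ t in nhds (0 : ℝ), h' t = 0) ∨ ν < ord h') ∧
        RLEquiv (fun t : ℝ => ![t ^ n, t ^ m + b * t ^ ν + h t])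
          (fun τ : ℝ => ![τ ^ n, τ ^ m + h' τ])) := by
  obtain ⟨j, hj, hjm⟩ := exists_add_eq_succ_mul_of_mem_numSemigroup2 hν hν1 hν2
  refine ⟨⟨j, hj, hjm⟩, fun b h hh hord => ?_⟩
  obtain ⟨e, rfl⟩ : ∃ e, ν = m + e := ⟨ν - m, by omega⟩
  rw [eventually_eq_zero_or_lt_ord_iff hh] at hord
  obtain ⟨h', hh', hord', hrl⟩ := exists_rlEquiv_of_le_analyticOrderAt (j := j) hn.ne'
    (hn.trans hnm).ne' (by omega) (by rw [add_one_mul] at hjm; omega) b hh hord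
  exact ⟨h', hh', (eventually_eq_zero_or_lt_ord_iff hh').mpr hord', hrl⟩
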